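/- arXiv:1607.05752 — 3 statements merged into one kernel-verified Lean document; each statement's English description precedes it below -/
import Mathlib

section
/- If q₁(t) = Σ_{j=1}^m a_j e^{-μ_j t} and q₂(t) = Σ_{j=1}^m b_j e^{-ν_j t} are finite exponential sums with positive distinct exponents and positive coefficients, and ∫₀^∞ t^{k-1} q₁(t) dt = ∫₀^∞ t^{k-1} q₂(t) dt for all positive integers k, then q₁ = q₂ as functions on (0, ∞). -/
/-!
The `k`-th moment of `e^{-μt}` on `(0, ∞)` is `(k-1)! / μ^k`, so the moment identities say that
the discrete measures `∑ aⱼ δ_{1/μⱼ}` and `∑ bⱼ δ_{1/νⱼ}` have the same power moments of every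
order `k ≥ 1`. As the atoms are nonzero, multiplying the difference of the two measures by `x`
gives a finitely supported measure annihilating all polynomials; testing it against Lagrange
basis polynomials shows it vanishes. Hence the two measures integrate every function equally,
in particular `x ↦ e^{-t/x}`, which gives `q₁ t = q₂ t`.
-/

open MeasureTheory Finset Polynomial
open scoped Nat

section PowerSums

variable {K : Type*} [Field K]

theorem Finset.sum_mul_eval_eq_zero_of_forall_sum_mul_pow_eq_zero {S : Finset K} {d : K → K}
    (h : ∀ n : ℕ, ∑ x ∈ S, d x * x ^ n = 0) (p : K[X]) : ∑ x ∈ S, d x * p.eval x = 0 := by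
  simp_rw [eval_eq_sum_range, Finset.mul_sum, mul_left_comm (d _)]
  rw [Finset.sum_comm]
  simp [← Finset.mul_sum, h]

theorem Finset.eq_zero_of_forall_sum_mul_pow_eq_zero [DecidableEq K] {S : Finset K} {d : K → K}
    (h : ∀ n : ℕ, ∑ x ∈ S, d x * x ^ n = 0) {x : K} (hx : x ∈ S) : d x = 0 := by
  have hL := S.sum_mul_eval_eq_zero_of_forall_sum_mul_pow_eq_zero h (Lagrange.basis S id x)
  have hself : eval x (Lagrange.basis S id x) = 1 :=
    Lagrange.eval_basis_self (v := id) Function.injective_id.injOn hx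
  rwa [Finset.sum_eq_single_of_mem x hx fun y hy hyx ↦ by
      rw [show eval y _ = 0 from Lagrange.eval_basis_of_ne (v := id) hyx.symm hy, mul_zero],
    hself, mul_one] at hL

theorem sum_mul_comp_eq_zero_of_forall_sum_mul_pow_succ_eq_zero {ι : Type*} [Fintype ι]
    {w r : ι → K} (hr : ∀ i, r i ≠ 0) (h : ∀ n : ℕ, ∑ i, w i * r i ^ (n + 1) = 0) (g : K → K) :
    ∑ i, w i * g (r i) = 0 := by
  classical
  set S := univ.image r
  set W : K → K := fun x ↦ ∑ i with r i = x, w i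
  have fiberwise : ∀ f : K → K, ∑ i, w i * f (r i) = ∑ x ∈ S, W x * f x := fun f ↦ by
    rw [← Finset.sum_fiberwise_of_maps_to (fun i _ ↦ mem_image_of_mem r (mem_univ i))]
    refine Finset.sum_congr rfl fun x _ ↦ ?_
    rw [Finset.sum_mul]
    exact Finset.sum_congr rfl fun i hi ↦ by rw [(mem_filter.1 hi).2]
  have hW : ∀ x ∈ S, W x = 0 := fun x hx ↦ by
    -- the weights `W x * x` have vanishing moments of every order, including the zeroth
    have hWx := S.eq_zero_of_forall_sum_mul_pow_eq_zero (d := fun x ↦ W x * x)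
      (fun n ↦ by simpa [← fiberwise, mul_assoc, pow_succ'] using h n) hx
    obtain ⟨i, -, rfl⟩ := mem_image.1 hx
    exact (mul_eq_zero.1 hWx).resolve_right (hr i)
  rw [fiberwise]
  exact Finset.sum_eq_zero fun x hx ↦ by rw [hW x hx, zero_mul]

theorem sum_mul_comp_eq_of_forall_sum_mul_pow_succ_eq {ι κ : Type*} [Fintype ι] [Fintype κ]
    {a r : ι → K} {b s : κ → K} (hr : ∀ i, r i ≠ 0) (hs : ∀ j, s j ≠ 0)
    (h : ∀ n : ℕ, ∑ i, a i * r i ^ (n + 1) = ∑ j, b j * s j ^ (n + 1)) (g : K → K) :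
    ∑ i, a i * g (r i) = ∑ j, b j * g (s j) := by
  have key := sum_mul_comp_eq_zero_of_forall_sum_mul_pow_succ_eq_zero
    (w := Sum.elim a (-b)) (r := Sum.elim r s) (by simp [hr, hs])
    (fun n ↦ by simpa [add_neg_eq_zero] using h n) g
  simpa [add_neg_eq_zero] using key

end PowerSums

theorem integral_pow_mul_exp_neg_mul_Ioi {w : ℝ} (hw : 0 < w) (n : ℕ) :
    ∫ t in Set.Ioi (0 : ℝ), t ^ n * Real.exp (-w * t) = n ! / w ^ (n + 1) := by
  have h := Real.integral_rpow_mul_exp_neg_mul_Ioi (a := n + 1) (by positivity) hw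
  simp only [add_sub_cancel_right, Real.rpow_natCast, Real.Gamma_nat_eq_factorial, neg_mul] at h ⊢
  rw [h, ← Nat.cast_add_one, Real.rpow_natCast]
  ring

theorem integrableOn_pow_mul_exp_neg_mul_Ioi {w : ℝ} (hw : 0 < w) (n : ℕ) :
    IntegrableOn (fun t ↦ t ^ n * Real.exp (-w * t)) (Set.Ioi 0) :=
  .of_integral_ne_zero <| by rw [integral_pow_mul_exp_neg_mul_Ioi hw]; positivity

theorem integral_pow_mul_sum_exp_neg_mul_Ioi {ι : Type*} [Fintype ι] {a μ : ι → ℝ}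
    (hμ : ∀ i, 0 < μ i) (n : ℕ) :
    ∫ t in Set.Ioi (0 : ℝ), t ^ n * ∑ i, a i * Real.exp (-μ i * t) =
      n ! * ∑ i, a i * (μ i)⁻¹ ^ (n + 1) := by
  simp_rw [Finset.mul_sum, mul_left_comm (_ ^ n) (a _)]
  rw [integral_finsetSum _ fun i _ ↦ (integrableOn_pow_mul_exp_neg_mul_Ioi (hμ i) n).const_mul _]
  refine Finset.sum_congr rfl fun i _ ↦ ?_
  rw [integral_const_mul, integral_pow_mul_exp_neg_mul_Ioi (hμ i)]
  ring

theorem moments_determine_heat_content_general (m : ℕ)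
    (μ a ν b : Fin m → ℝ)
    (hμ0 : ∀ j, 0 < μ j) (hν0 : ∀ j, 0 < ν j)
    (q₁ q₂ : ℝ → ℝ)
    (hq₁ : ∀ t, q₁ t = ∑ j, a j * Real.exp (-μ j * t))
    (hq₂ : ∀ t, q₂ t = ∑ j, b j * Real.exp (-ν j * t))
    (hmom : ∀ k : ℕ, 1 ≤ k →
      ∫ t in Set.Ioi (0:ℝ), t ^ (k - 1) * q₁ t =
        ∫ t in Set.Ioi (0:ℝ), t ^ (k - 1) * q₂ t) :
    ∀ t : ℝ, 0 < t → q₁ t = q₂ t := by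
  have hpow : ∀ n : ℕ, ∑ j, a j * (μ j)⁻¹ ^ (n + 1) = ∑ j, b j * (ν j)⁻¹ ^ (n + 1) := fun n ↦ by
    have h := hmom (n + 1) (Nat.le_add_left 1 n)
    simp only [Nat.add_sub_cancel, hq₁, hq₂, integral_pow_mul_sum_exp_neg_mul_Ioi hμ0,
      integral_pow_mul_sum_exp_neg_mul_Ioi hν0] at h
    exact mul_left_cancel₀ (Nat.cast_ne_zero.2 n.factorial_ne_zero) h
  intro t _
  have h := sum_mul_comp_eq_of_forall_sum_mul_pow_succ_eq (fun j ↦ (inv_pos.2 (hμ0 j)).ne')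
    (fun j ↦ (inv_pos.2 (hν0 j)).ne') hpow fun x ↦ Real.exp (-x⁻¹ * t)
  simpa [hq₁, hq₂] using h

theorem moments_determine_heat_content (m : ℕ)
    (μ a ν b : Fin m → ℝ)
    (hμ0 : ∀ j, 0 < μ j) (hν0 : ∀ j, 0 < ν j)
    (hμ : Function.Injective μ) (hν : Function.Injective ν)
    (ha : ∀ j, 0 < a j) (hb : ∀ j, 0 < b j)
    (q₁ q₂ : ℝ → ℝ)
    (hq₁ : ∀ t, q₁ t = ∑ j, a j * Real.exp (-μ j * t))
    (hq₂ : ∀ t, q₂ t = ∑ j, b j * Real.exp (-ν j * t))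
    (hmom : ∀ k : ℕ, 1 ≤ k →
      ∫ t in Set.Ioi (0:ℝ), t ^ (k - 1) * q₁ t =
        ∫ t in Set.Ioi (0:ℝ), t ^ (k - 1) * q₂ t) :
    ∀ t : ℝ, 0 < t → q₁ t = q₂ t :=
  moments_determine_heat_content_general m μ a ν b hμ0 hν0 q₁ q₂ hq₁ hq₂ hmom
end

section
/- For positive reals a, b, c, the matrices D₁ and D₂ (defined as the 6×6 weighted Laplacians with entries as above) are positive definite, and ⟨D₁⁻¹v, v⟩ - ⟨D₂⁻¹v, v⟩ = (a-b)(a-c)(b-c) · 56(bc + a(b+c)) / d(a,b,c), where v = (1,1,1,1,1,1)ᵀ and d(a,b,c) = 32a⁴(b+c)² + 8b²c²(4b² + 9bc + 4c²) + 8abc(b+c)(8b² + 23bc + 8c²) + 8a³(b+c)(9b² + 22bc + 9c²) + a²(32b⁴ + 248b³c + 439b²c² + 248bc³ + 32c⁴). -/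
/-!
Both Laplacians are symmetric and strictly diagonally dominant with positive diagonal, so by
Gershgorin's theorem all their eigenvalues are positive. `D₂` is `D₁` with `b` and `c` swapped.
An explicit polynomial vector `P` with `D₁ *ᵥ P = d • 1` gives `D₁⁻¹ *ᵥ 1 = d⁻¹ • P`. Since `d`
is symmetric in `b` and `c`, the difference of the two torsions is
`(∑ P(a,b,c) - ∑ P(a,c,b)) / d`, and the numerator factors as claimed.
-/

open Matrix

theorem Matrix.posDef_of_sum_abs_row_lt_diag {n : Type*} [Fintype n] [DecidableEq n]
    {A : Matrix n n ℝ} (hA : A.IsHermitian)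
    (h : ∀ k, ∑ j ∈ Finset.univ.erase k, |A k j| < A k k) : A.PosDef := by
  rw [hA.posDef_iff_eigenvalues_pos]
  intro i
  have hμ : Module.End.HasEigenvalue (toLin' A) (hA.eigenvalues i) := by
    rw [Module.End.hasEigenvalue_iff_mem_spectrum, spectrum_toLin']
    exact hA.eigenvalues_mem_spectrum_real i
  obtain ⟨k, hk⟩ := eigenvalue_mem_ball hμ
  rw [Metric.mem_closedBall, Real.dist_eq] at hk
  simp only [Real.norm_eq_abs] at hk
  linarith [h k, neg_abs_le (hA.eigenvalues i - A k k)]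

theorem Matrix.inv_mulVec_eq_inv_smul {n K : Type*} [Fintype n] [DecidableEq n] [Field K]
    {A : Matrix n n K} (hA : IsUnit A.det) {p v : n → K} {d : K} (hd : d ≠ 0)
    (h : A *ᵥ p = d • v) : A⁻¹ *ᵥ v = d⁻¹ • p := by
  let := A.invertibleOfIsUnitDet hA
  refine inv_mulVec_eq_vec ?_
  rw [mulVec_smul, h, smul_smul, inv_mul_cancel₀ hd, one_smul]

noncomputable def torsionLaplacian (a b c : ℝ) : Matrix (Fin 6) (Fin 6) ℝ :=
  !![a+c, 0, 0, -c/2, 0, 0;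
     0, a+b, 0, 0, -a/2, 0;
     0, 0, b+c, 0, 0, -b/2;
     -c/2, 0, 0, b+c, -c/2, -b/2;
     0, -a/2, 0, -c/2, a+c, -a/2;
     0, 0, -b/2, -b/2, -a/2, a+b]

lemma torsionLaplacian_isHermitian (a b c : ℝ) : (torsionLaplacian a b c).IsHermitian := by
  ext i j
  fin_cases i <;> fin_cases j <;> rfl

lemma torsionLaplacian_posDef {a b c : ℝ} (ha : 0 < a) (hb : 0 < b) (hc : 0 < c) :
    (torsionLaplacian a b c).PosDef := by
  refine posDef_of_sum_abs_row_lt_diag (torsionLaplacian_isHermitian a b c) fun k => ?_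
  rw [Finset.sum_erase_eq_sub (Finset.mem_univ k)]
  fin_cases k <;>
    simp only [torsionLaplacian, Fin.sum_univ_six, Fin.zero_eta, Fin.mk_one, Fin.reduceFinMk,
      Fin.isValue, of_apply, cons_val', cons_val_fin_one, cons_val, cons_val_one, cons_val_zero,
      abs_zero, abs_div, abs_neg, abs_of_pos ha, abs_of_pos hb, abs_of_pos hc, Nat.abs_ofNat] <;>
    linarith

def torsionDenom (a b c : ℝ) : ℝ :=
  32*a^4*(b+c)^2 + 8*b^2*c^2*(4*b^2 + 9*b*c + 4*c^2)
    + 8*a*b*c*(b+c)*(8*b^2 + 23*b*c + 8*c^2)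
    + 8*a^3*(b+c)*(9*b^2 + 22*b*c + 9*c^2)
    + a^2*(32*b^4 + 248*b^3*c + 439*b^2*c^2 + 248*b*c^3 + 32*c^4)

/-- Equals `64 • adjugate (torsionLaplacian a b c) *ᵥ 1`, as `torsionDenom a b c` is
`64 * det (torsionLaplacian a b c)`. -/
def torsionNumerator (a b c : ℝ) : Fin 6 → ℝ :=
  ![32*a^3*b^2 + 80*a^3*b*c + 48*a^3*c^2 + 72*a^2*b^3 + 288*a^2*b^2*c + 332*a^2*b*c^2
      + 112*a^2*c^3 + 32*a*b^4 + 232*a*b^3*c + 426*a*b^2*c^2 + 224*a*b*c^3 + 32*b^4*c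
      + 144*b^3*c^2 + 112*b^2*c^3,
    112*a^3*b^2 + 224*a^3*b*c + 112*a^3*c^2 + 48*a^2*b^3 + 332*a^2*b^2*c + 426*a^2*b*c^2
      + 144*a^2*c^3 + 80*a*b^3*c + 288*a*b^2*c^2 + 232*a*b*c^3 + 32*a*c^4 + 32*b^3*c^2
      + 72*b^2*c^3 + 32*b*c^4,
    32*a^4*b + 32*a^4*c + 144*a^3*b^2 + 232*a^3*b*c + 72*a^3*c^2 + 112*a^2*b^3
      + 426*a^2*b^2*c + 288*a^2*b*c^2 + 32*a^2*c^3 + 224*a*b^3*c + 332*a*b^2*c^2 + 80*a*b*c^3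
      + 112*b^3*c^2 + 48*b^2*c^3,
    32*a^4*b + 32*a^4*c + 144*a^3*b^2 + 328*a^3*b*c + 176*a^3*c^2 + 112*a^2*b^3
      + 550*a^2*b^2*c + 616*a^2*b*c^2 + 160*a^2*c^3 + 256*a*b^3*c + 580*a*b^2*c^2 + 320*a*b*c^3
      + 144*b^3*c^2 + 160*b^2*c^3,
    160*a^3*b^2 + 320*a^3*b*c + 160*a^3*c^2 + 176*a^2*b^3 + 616*a^2*b^2*c + 580*a^2*b*c^2
      + 144*a^2*c^3 + 32*a*b^4 + 328*a*b^3*c + 550*a*b^2*c^2 + 256*a*b*c^3 + 32*b^4*c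
      + 144*b^3*c^2 + 112*b^2*c^3,
    144*a^3*b^2 + 256*a^3*b*c + 112*a^3*c^2 + 160*a^2*b^3 + 580*a^2*b^2*c + 550*a^2*b*c^2
      + 144*a^2*c^3 + 320*a*b^3*c + 616*a*b^2*c^2 + 328*a*b*c^3 + 32*a*c^4 + 160*b^3*c^2
      + 176*b^2*c^3 + 32*b*c^4]

lemma torsionDenom_pos {a b c : ℝ} (ha : 0 < a) (hb : 0 < b) (hc : 0 < c) :
    0 < torsionDenom a b c := by
  unfold torsionDenom; positivity

lemma torsionDenom_swap (a b c : ℝ) : torsionDenom a c b = torsionDenom a b c := by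
  unfold torsionDenom; ring

lemma torsionLaplacian_mulVec_torsionNumerator (a b c : ℝ) :
    torsionLaplacian a b c *ᵥ torsionNumerator a b c = torsionDenom a b c • 1 := by
  ext i
  fin_cases i <;>
    simp only [torsionLaplacian, torsionNumerator, torsionDenom, mulVec, dotProduct,
      Fin.sum_univ_six, Fin.zero_eta, Fin.mk_one, Fin.reduceFinMk, Fin.isValue, of_apply, cons_val',
      cons_val_fin_one, cons_val, cons_val_one, cons_val_zero, Pi.smul_apply, Pi.one_apply,
      smul_eq_mul, mul_one] <;>
    ring

lemma torsionLaplacian_inv_mulVec_one_dotProduct {a b c : ℝ} (ha : 0 < a) (hb : 0 < b)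
    (hc : 0 < c) :
    ((torsionLaplacian a b c)⁻¹ *ᵥ 1) ⬝ᵥ 1 =
      (∑ i, torsionNumerator a b c i) / torsionDenom a b c := by
  rw [inv_mulVec_eq_inv_smul (torsionLaplacian_posDef ha hb hc).det_pos.ne'.isUnit
    (torsionDenom_pos ha hb hc).ne' (torsionLaplacian_mulVec_torsionNumerator a b c)]
  simp [dotProduct, div_eq_inv_mul, Finset.mul_sum]

lemma sum_torsionNumerator_sub_swap (a b c : ℝ) :
    ∑ i, torsionNumerator a b c i - ∑ i, torsionNumerator a c b i =
      (a - b) * (a - c) * (b - c) * (56 * (b*c + a*(b+c))) := by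
  simp only [torsionNumerator, Fin.sum_univ_six, Fin.isValue, cons_val_zero, cons_val_one, cons_val]
  ring

theorem combinatorial_torsion_difference (a b c : ℝ) (ha : 0 < a) (hb : 0 < b) (hc : 0 < c)
    (D₁ D₂ : Matrix (Fin 6) (Fin 6) ℝ)
    (hD₁ : D₁ = !![a+c, 0, 0, -c/2, 0, 0;
       0, a+b, 0, 0, -a/2, 0;
       0, 0, b+c, 0, 0, -b/2;
       -c/2, 0, 0, b+c, -c/2, -b/2;
       0, -a/2, 0, -c/2, a+c, -a/2;
       0, 0, -b/2, -b/2, -a/2, a+b])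
    (hD₂ : D₂ = !![a+b, 0, 0, -b/2, 0, 0;
       0, a+c, 0, 0, -a/2, 0;
       0, 0, b+c, 0, 0, -c/2;
       -b/2, 0, 0, b+c, -b/2, -c/2;
       0, -a/2, 0, -b/2, a+b, -a/2;
       0, 0, -c/2, -c/2, -a/2, a+c])
    (v : Fin 6 → ℝ) (hv : v = fun _ => 1) :
    D₁.PosDef ∧ D₂.PosDef ∧
    (D₁⁻¹ *ᵥ v) ⬝ᵥ v - (D₂⁻¹ *ᵥ v) ⬝ᵥ v =
      (a - b) * (a - c) * (b - c) * (56 * (b*c + a*(b+c))) /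
        (32*a^4*(b+c)^2 + 8*b^2*c^2*(4*b^2 + 9*b*c + 4*c^2)
          + 8*a*b*c*(b+c)*(8*b^2 + 23*b*c + 8*c^2)
          + 8*a^3*(b+c)*(9*b^2 + 22*b*c + 9*c^2)
          + a^2*(32*b^4 + 248*b^3*c + 439*b^2*c^2 + 248*b*c^3 + 32*c^4)) := by
  obtain rfl : D₁ = torsionLaplacian a b c := hD₁
  obtain rfl : D₂ = torsionLaplacian a c b := by rw [hD₂, torsionLaplacian, add_comm c b]
  obtain rfl : v = 1 := hv
  refine ⟨torsionLaplacian_posDef ha hb hc, torsionLaplacian_posDef ha hc hb, ?_⟩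
  rw [torsionLaplacian_inv_mulVec_one_dotProduct ha hb hc,
    torsionLaplacian_inv_mulVec_one_dotProduct ha hc hb, torsionDenom_swap a b c, ← sub_div,
    sum_torsionNumerator_sub_swap]
  rfl
end

section
/- For positive pairwise distinct reals a, b, c, the expression (a-b)(a-c)(b-c) · N(a,b,c)/D(a,b,c) is nonzero, where N(a,b,c) = -4(bc + a(b+c))(11a³(b+c) + bc(11b²+23bc+11c²) + a(b+c)(11b²+48bc+11c²) + a²(23b²+59bc+23c²)) and D(a,b,c) = 32a⁴(b+c)² + 8b²c²(4b²+9bc+4c²) + 8abc(b+c)(8b²+23bc+8c²) + 8a³(b+c)(9b²+22bc+9c²) + a²(32b⁴+248b³c+439b²c²+248bc³+32c⁴). -/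
theorem torsion_difference_nonzero (a b c : ℝ) (ha : 0 < a) (hb : 0 < b) (hc : 0 < c)
    (hab : a ≠ b) (hac : a ≠ c) (hbc : b ≠ c) :
    (a - b) * (a - c) * (b - c) *
      ((-4*(b*c + a*(b+c)) * (11*a^3*(b+c) + b*c*(11*b^2 + 23*b*c + 11*c^2)
        + a*(b+c)*(11*b^2 + 48*b*c + 11*c^2) + a^2*(23*b^2 + 59*b*c + 23*c^2))) /
       (32*a^4*(b+c)^2 + 8*b^2*c^2*(4*b^2 + 9*b*c + 4*c^2)
        + 8*a*b*c*(b+c)*(8*b^2 + 23*b*c + 8*c^2)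
        + 8*a^3*(b+c)*(9*b^2 + 22*b*c + 9*c^2)
        + a^2*(32*b^4 + 248*b^3*c + 439*b^2*c^2 + 248*b*c^3 + 32*c^4))) ≠ 0 := by
  have h1 : a - b ≠ 0 := sub_ne_zero.mpr hab
  have h2 : a - c ≠ 0 := sub_ne_zero.mpr hac
  have h3 : b - c ≠ 0 := sub_ne_zero.mpr hbc
  have hNpos : (0:ℝ) < 4*(b*c + a*(b+c)) * (11*a^3*(b+c) + b*c*(11*b^2 + 23*b*c + 11*c^2)
        + a*(b+c)*(11*b^2 + 48*b*c + 11*c^2) + a^2*(23*b^2 + 59*b*c + 23*c^2)) := by positivity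
  have hN : (-4*(b*c + a*(b+c)) * (11*a^3*(b+c) + b*c*(11*b^2 + 23*b*c + 11*c^2)
        + a*(b+c)*(11*b^2 + 48*b*c + 11*c^2) + a^2*(23*b^2 + 59*b*c + 23*c^2))) ≠ 0 := by
    nlinarith [hNpos]
  have hD : (32*a^4*(b+c)^2 + 8*b^2*c^2*(4*b^2 + 9*b*c + 4*c^2)
        + 8*a*b*c*(b+c)*(8*b^2 + 23*b*c + 8*c^2)
        + 8*a^3*(b+c)*(9*b^2 + 22*b*c + 9*c^2)
        + a^2*(32*b^4 + 248*b^3*c + 439*b^2*c^2 + 248*b*c^3 + 32*c^4)) ≠ 0 := by positivity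
  exact mul_ne_zero (mul_ne_zero (mul_ne_zero h1 h2) h3) (div_ne_zero hN hD)
end
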